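/- Suppose the differentiator error system ẋᵢ = x_{i+1} + φᵢ(t, x₁ + η₁(t)) (i = 1,…,n-1), ẋₙ = d(t) + φₙ(t, x₁ + η₁(t)) on [0,T), n ≥ 2, has an absolute deadline at T (with η₁ ≡ 0). Then for every η̄ > 0 and ε > 0 there exists a Lipschitz continuous noise η₁ : [0,T) → [-η̄, η̄] such that every corresponding solution satisfies ‖lim_{t→T⁻} x(t)‖ ≥ ε. In particular, the noise η₁(t) = -η̄ for t < s and η₁(t) = -η̄ + (t-s)ε for t ∈ [s,T), with s = T - 2η̄/ε, forces lim_{t→T⁻} x₂(t) = -ε. -/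

import Mathlib

open Set Filter

/-- A solution, on `[s,T)`, of the differentiator error system
    ẋᵢ = x_{i+1} + φᵢ(t, x₁ + η₁(t)) (i < n), ẋₙ = d(t) + φₙ(t, x₁ + η₁(t)). -/
def DiffSol (n : ℕ) (hn : 0 < n) (T : ℝ)
    (φ : Fin n → ℝ → ℝ → ℝ) (d : ℝ → ℝ) (η₁ : ℝ → ℝ) (s : ℝ)
    (x : ℝ → EuclideanSpace ℝ (Fin n)) : Prop :=
  ∀ t ∈ Set.Ico s T,
    (∀ i : Fin n, ∀ h : (i : ℕ) + 1 < n,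
      HasDerivAt (fun τ => x τ i)
        (x t ⟨(i : ℕ) + 1, h⟩ + φ i t (x t ⟨0, hn⟩ + η₁ t)) t) ∧
    HasDerivAt (fun τ => x τ ⟨n - 1, Nat.sub_lt hn one_pos⟩)
      (d t + φ ⟨n - 1, Nat.sub_lt hn one_pos⟩ t (x t ⟨0, hn⟩ + η₁ t)) t

/-- Absolute deadline at `T` (with η₁ ≡ 0). -/
def DiffAbsDeadline (n : ℕ) (hn : 0 < n) (T : ℝ)
    (φ : Fin n → ℝ → ℝ → ℝ) (d : ℝ → ℝ) : Prop :=
  ∀ s ∈ Set.Ico (0:ℝ) T, ∀ x : ℝ → EuclideanSpace ℝ (Fin n),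
    DiffSol n hn T φ d (fun _ => 0) s x →
    Filter.Tendsto x (nhdsWithin T (Set.Iio T)) (nhds 0)

/-!
Wherever the noise has constant slope `η̇₁ = ε`, the substitution `z = x + η₁ e₀ + ε e₁`
(coordinates `⟨0⟩` and `⟨1⟩` are the paper's `x₁` and `x₂`) turns the noisy error system into
the noise-free one. The deadline then forces `z(T⁻) = 0`, that is
`x(T⁻) = -(η₁(T⁻) e₀ + ε e₁)`, whose norm is at least `ε`. The noise equal to `-η̄` and then
rising with slope `ε` during the last `2η̄/ε` time units stays within `[-η̄, η̄]`.
-/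

open Topology EuclideanSpace

def rampNoise (η ε s t : ℝ) : ℝ := max (-η) (-η + (t - s) * ε)

section rampNoise

variable {η ε s : ℝ}

theorem rampNoise_eq_ite (hε : 0 ≤ ε) :
    rampNoise η ε s = fun t => if t < s then -η else -η + (t - s) * ε := by
  ext t
  unfold rampNoise
  split_ifs with hts
  · exact max_eq_left (by nlinarith)
  · exact max_eq_right (by nlinarith)

theorem lipschitzWith_rampNoise (hε : 0 ≤ ε) :
    LipschitzWith ⟨ε, hε⟩ (rampNoise η ε s) := by
  refine LipschitzWith.const_max (LipschitzWith.of_dist_le_mul fun a b => ?_) _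
  rw [Real.dist_eq, Real.dist_eq, show -η + (a - s) * ε - (-η + (b - s) * ε) = ε * (a - b) by ring,
    abs_mul, abs_of_nonneg hε]
  rfl

theorem abs_rampNoise_le {t : ℝ} (hη : 0 ≤ η) (ht : (t - s) * ε ≤ 2 * η) :
    |rampNoise η ε s t| ≤ η :=
  abs_le.2 ⟨le_max_left _ _, max_le (by linarith) (by linarith)⟩

theorem hasDerivAt_rampNoise {t : ℝ} (hε : 0 ≤ ε) (hst : s < t) :
    HasDerivAt (rampNoise η ε s) ε t := by
  have hlin : HasDerivAt (fun τ => -η + (τ - s) * ε) ε t := by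
    simpa using (((hasDerivAt_id t).sub_const s).mul_const ε).const_add (-η)
  refine hlin.congr_of_eventuallyEq ?_
  filter_upwards [Ioi_mem_nhds hst] with τ hτ
  exact max_eq_right (by nlinarith [mem_Ioi.1 hτ])

theorem continuous_rampNoise : Continuous (rampNoise η ε s) := by
  unfold rampNoise; fun_prop

end rampNoise

theorem hasDerivAt_add_single_apply {n : ℕ} {x : ℝ → EuclideanSpace ℝ (Fin n)} {f : ℝ → ℝ}
    {a f' t c : ℝ} {j : Fin n} (hx : HasDerivAt (fun τ => x τ j) a t) (hf : HasDerivAt f f' t)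
    (i₀ i₁ : Fin n) :
    HasDerivAt (fun τ => (x τ + single i₀ (f τ) + single i₁ c) j)
      (a + if j = i₀ then f' else 0) t := by
  have hsingle : HasDerivAt (fun τ => single i₀ (f τ) j) (if j = i₀ then f' else 0) t := by
    simp only [PiLp.single_apply]
    split_ifs
    · exact hf
    · exact hasDerivAt_const t 0
  exact (hx.add hsingle).add_const _

namespace DiffSol

variable {n : ℕ} {hn : 0 < n} {T : ℝ} {φ : Fin n → ℝ → ℝ → ℝ} {d η₁ : ℝ → ℝ} {s : ℝ}
  {x : ℝ → EuclideanSpace ℝ (Fin n)}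

theorem mono {s' : ℝ} (hx : DiffSol n hn T φ d η₁ s x) (hs : s ≤ s') :
    DiffSol n hn T φ d η₁ s' x :=
  fun t ht => hx t ⟨hs.trans ht.1, ht.2⟩

theorem add_single_noise (h1 : 1 < n) {ε : ℝ} (hη : ∀ t ∈ Ico s T, HasDerivAt η₁ ε t)
    (hx : DiffSol n hn T φ d η₁ s x) :
    DiffSol n hn T φ d (fun _ => 0) s
      (fun t => x t + single ⟨0, hn⟩ (η₁ t) + single ⟨1, h1⟩ ε) := by
  intro t ht
  obtain ⟨hxi, hxn⟩ := hx t ht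
  refine ⟨fun i hi => ?_, ?_⟩
  · refine (hasDerivAt_add_single_apply (hxi i hi) (hη t ht) _ _).congr_deriv ?_
    simp only [PiLp.add_apply, PiLp.single_apply, Fin.ext_iff, Nat.add_eq_right,
      Nat.add_eq_zero_iff, one_ne_zero, zero_ne_one, and_false, if_false, if_true, add_zero]
    ring
  · refine (hasDerivAt_add_single_apply hxn (hη t ht) _ _).congr_deriv ?_
    simp [Fin.ext_iff, show n - 1 ≠ 0 by omega]

end DiffSol

theorem EuclideanSpace.continuous_single {n : ℕ} (i : Fin n) : Continuous fun a : ℝ => single i a :=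
  (Isometry.of_dist_eq fun a b => PiLp.dist_single_same 2 (fun _ => ℝ) i a b).continuous

namespace DiffAbsDeadline

variable {n : ℕ} {hn : 0 < n} {T : ℝ} {φ : Fin n → ℝ → ℝ → ℝ} {d η₁ : ℝ → ℝ} {s : ℝ}
  {x : ℝ → EuclideanSpace ℝ (Fin n)}

theorem tendsto_of_hasDerivAt_noise (habs : DiffAbsDeadline n hn T φ d) (h1 : 1 < n)
    (hs : s ∈ Ico 0 T) {ε ηT : ℝ} (hη : ∀ t ∈ Ico s T, HasDerivAt η₁ ε t)
    (hηT : Tendsto η₁ (𝓝[<] T) (𝓝 ηT)) (hx : DiffSol n hn T φ d η₁ s x) :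
    Tendsto x (𝓝[<] T) (𝓝 (-(single (⟨0, hn⟩ : Fin n) ηT + single ⟨1, h1⟩ ε))) := by
  have hz := habs s hs _ (hx.add_single_noise h1 hη)
  have hshift : Tendsto (fun t => single ⟨0, hn⟩ (η₁ t) + single ⟨1, h1⟩ ε) (𝓝[<] T)
      (𝓝 (single (⟨0, hn⟩ : Fin n) ηT + single ⟨1, h1⟩ ε)) :=
    ((EuclideanSpace.continuous_single _).tendsto ηT |>.comp hηT).add tendsto_const_nhds
  simpa [add_assoc] using hz.sub hshift

theorem tendsto_of_rampNoise (habs : DiffAbsDeadline n hn T φ d) (h1 : 1 < n) {η ε : ℝ}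
    (hη : 0 < η) (hε : 0 < ε) (hT : 2 * η / ε ≤ T)
    (hx : DiffSol n hn T φ d (rampNoise η ε (T - 2 * η / ε)) 0 x) :
    Tendsto x (𝓝[<] T) (𝓝 (-(single (⟨0, hn⟩ : Fin n) η + single ⟨1, h1⟩ ε))) := by
  set s := T - 2 * η / ε with hs
  have hs0 : 0 ≤ s := by linarith
  have hsT : s < T := by linarith [div_pos (mul_pos two_pos hη) hε]
  have hramp : rampNoise η ε s T = η := by
    rw [rampNoise, show T - s = 2 * η / ε by ring, div_mul_cancel₀ _ hε.ne']
    exact (max_eq_right (by linarith)).trans (by ring)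
  have hlim : Tendsto (rampNoise η ε s) (𝓝[<] T) (𝓝 (rampNoise η ε s T)) :=
    (continuous_rampNoise.tendsto T).mono_left nhdsWithin_le_nhds
  rw [hramp] at hlim
  have hmid : (s + T) / 2 ∈ Ico 0 T := ⟨by linarith, by linarith⟩
  exact habs.tendsto_of_hasDerivAt_noise h1 hmid
    (fun t ht => hasDerivAt_rampNoise hε.le (by linarith [ht.1])) hlim (hx.mono hmid.1)

end DiffAbsDeadline

/-- Theorem 2(ii): under an absolute deadline at `T`, for all
    η̄, ε > 0 there is a Lipschitz noise η₁ bounded by η̄ such that every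
    corresponding solution has a limit of norm at least ε at T⁻.  In particular,
    when 2η̄/ε ≤ T, the noise η₁(t) = -η̄ for t < s and η₁(t) = -η̄ + (t-s)ε for
    t ≥ s, with s = T - 2η̄/ε, forces x₂(t) → -ε. -/
theorem stmt8 (n : ℕ) (hn : 2 ≤ n) (T : ℝ) (hT : 0 < T)
    (φ : Fin n → ℝ → ℝ → ℝ) (d : ℝ → ℝ)
    (habs : DiffAbsDeadline n (by omega) T φ d) :
    ∀ η' > (0:ℝ), ∀ ε > (0:ℝ),
      (∃ η₁ : ℝ → ℝ, (∃ K : NNReal, LipschitzOnWith K η₁ (Set.Ico 0 T)) ∧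
        (∀ t ∈ Set.Ico (0:ℝ) T, |η₁ t| ≤ η') ∧
        (∀ x : ℝ → EuclideanSpace ℝ (Fin n),
          DiffSol n (by omega) T φ d η₁ 0 x →
          ∃ L : EuclideanSpace ℝ (Fin n),
            Filter.Tendsto x (nhdsWithin T (Set.Iio T)) (nhds L) ∧ ε ≤ ‖L‖)) ∧
      (2 * η' / ε ≤ T →
        ∀ x : ℝ → EuclideanSpace ℝ (Fin n),
          DiffSol n (by omega) T φ d
            (fun t => if t < T - 2 * η' / ε then -η'
              else -η' + (t - (T - 2 * η' / ε)) * ε) 0 x →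
          Filter.Tendsto (fun t => x t ⟨1, by omega⟩)
            (nhdsWithin T (Set.Iio T)) (nhds (-ε))) := by
  have h1 : 1 < n := by omega
  intro η' hη' ε hε
  refine ⟨?_, fun hεT x hx => ?_⟩
  · -- steepen the ramp so that it fits into `[0, T)`
    set ε' := max ε (2 * η' / T)
    have hε' : 0 < ε' := hε.trans_le (le_max_left _ _)
    have hε'T : 2 * η' / ε' ≤ T :=
      (div_le_iff₀' hε').2 ((div_le_iff₀ hT).1 (le_max_right _ _))
    refine ⟨rampNoise η' ε' (T - 2 * η' / ε'),
      ⟨_, (lipschitzWith_rampNoise hε'.le).lipschitzOnWith⟩, fun t ht => abs_rampNoise_le hη'.le ?_,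
      fun x hx => ⟨_, habs.tendsto_of_rampNoise h1 hη' hε' hε'T hx, ?_⟩⟩
    · calc (t - (T - 2 * η' / ε')) * ε' ≤ 2 * η' / ε' * ε' := by gcongr; linarith [ht.2]
        _ = 2 * η' := div_mul_cancel₀ _ hε'.ne'
    · calc ε ≤ ε' := le_max_left _ _
        _ = |(-(single ⟨0, by omega⟩ η' + single ⟨1, h1⟩ ε') : EuclideanSpace ℝ (Fin n))
              ⟨1, h1⟩| := by
          simp [Fin.ext_iff, abs_of_pos hε']
        _ ≤ _ := (Real.norm_eq_abs _).symm.trans_le (PiLp.norm_apply_le _ _)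
  · rw [← rampNoise_eq_ite hε.le] at hx
    simpa [Function.comp_def] using
      ((EuclideanSpace.proj (⟨1, h1⟩ : Fin n)).continuous.tendsto _).comp
        (habs.tendsto_of_rampNoise h1 hη' hε hεT hx)
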